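/- Let n ≥ 1, χ = 8(n+2), E₁ ∈ M_{n+1}(ℂ) the matrix with entry 1 in position (1,2), entry −1 in position (2,1), and all other entries 0, and e = χ^{−1/2}[[E₁, 0],[0, E₁]]. Then for all a ∈ iℝ, b ∈ ℂ, and row vectors 𝐚, 𝐛 ∈ ℂ^{n−1}: [e, [e, μ((a,b),(𝐚,𝐛))]] = (1/χ) μ((−4a, −4b), (−𝐚, −𝐛)). In particular the subspaces {μ((a,b),(0,0))} and {μ((0,0),(𝐚,𝐛))} of m_⊥ are eigenspaces of the linear map ad(e)² with eigenvalues −4/χ and −1/χ respectively. -/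
import Mathlib


open Matrix Complex

noncomputable section

/-- the index set {1,…,n+1} split as 1 + (1 + (n−1)) -/
abbrev Pn (n : ℕ) := Fin 1 ⊕ (Fin 1 ⊕ Fin (n - 1))

/-- entrywise complex conjugation of a matrix -/
def mconj {k l : Type*} (M : Matrix k l ℂ) : Matrix k l ℂ := M.map (starRingEnd ℂ)

/-- the standard symplectic structure matrix J = [[0, I_{n+1}],[−I_{n+1}, 0]] -/
def Jsp (n : ℕ) : Matrix (Pn n ⊕ Pn n) (Pn n ⊕ Pn n) ℂ := fromBlocks 0 1 (-1) 0

/-- I_{n,1} = diag(1, −Iₙ) -/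
def In1 (n : ℕ) : Matrix (Pn n) (Pn n) ℂ := fromBlocks 1 0 0 (-1)

/-- S = diag(I_{n,1}, I_{n,1}) -/
def Ssp (n : ℕ) : Matrix (Pn n ⊕ Pn n) (Pn n ⊕ Pn n) ℂ :=
  fromBlocks (In1 n) 0 0 (In1 n)

/-- E₁ : entry 1 in position (1,2), entry −1 in position (2,1), zero elsewhere -/
def E1sp (n : ℕ) : Matrix (Pn n) (Pn n) ℂ :=
  fromBlocks 0 (of fun _ j => Sum.elim (fun _ => (1 : ℂ)) (fun _ => 0) j)
               (of fun i _ => Sum.elim (fun _ => (-1 : ℂ)) (fun _ => 0) i) 0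

/-- e = χ^{−1/2} [[E₁, 0],[0, E₁]], χ = 8(n+2) -/
def esp (n : ℕ) : Matrix (Pn n ⊕ Pn n) (Pn n ⊕ Pn n) ℂ :=
  ((Real.sqrt (8 * ((n : ℝ) + 2)) : ℂ))⁻¹ • fromBlocks (E1sp n) 0 0 (E1sp n)

/-- A = [[0, a, 𝐚],[a, 0, 0],[−𝐚̄ᵀ, 0, 0]] -/
def Asp (n : ℕ) (a : ℂ) (av : Fin (n - 1) → ℂ) : Matrix (Pn n) (Pn n) ℂ :=
  fromBlocks 0 (of fun _ j => Sum.elim (fun _ => a) av j)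
               (of fun i _ => Sum.elim (fun _ => a) (fun k => -star (av k)) i) 0

/-- B = [[0, b, 𝐛],[b, 0, 0],[𝐛ᵀ, 0, 0]] -/
def Bsp (n : ℕ) (b : ℂ) (bv : Fin (n - 1) → ℂ) : Matrix (Pn n) (Pn n) ℂ :=
  fromBlocks 0 (of fun _ j => Sum.elim (fun _ => b) bv j)
               (of fun i _ => Sum.elim (fun _ => b) bv i) 0

/-- μ((a,b),(𝐚,𝐛)) = [[A, B],[−B̄, Ā]] ∈ m_⊥ -/
def musp (n : ℕ) (a b : ℂ) (av bv : Fin (n - 1) → ℂ) :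
    Matrix (Pn n ⊕ Pn n) (Pn n ⊕ Pn n) ℂ :=
  fromBlocks (Asp n a av) (Bsp n b bv) (-(mconj (Bsp n b bv))) (mconj (Asp n a av))

/-- C = [[c, 0, 0],[0, −c, 𝐜],[0, −𝐜̄ᵀ, 0]] -/
def Csp (n : ℕ) (c : ℂ) (cv : Fin (n - 1) → ℂ) : Matrix (Pn n) (Pn n) ℂ :=
  fromBlocks (of fun _ _ => c) 0 0
    (fromBlocks (of fun _ _ => -c) (of fun _ j => cv j) (of fun i _ => -star (cv i)) 0)

/-- D = [[d, 0, 0],[0, −d, 𝐝],[0, 𝐝ᵀ, 0]] -/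
def Dspm (n : ℕ) (d : ℂ) (dv : Fin (n - 1) → ℂ) : Matrix (Pn n) (Pn n) ℂ :=
  fromBlocks (of fun _ _ => d) 0 0
    (fromBlocks (of fun _ _ => -d) (of fun _ j => dv j) (of fun i _ => dv i) 0)

/-- η((c,d),(𝐜,𝐝)) = [[C, D],[−D̄, C̄]] ∈ h_⊥ -/
def etasp (n : ℕ) (c d : ℂ) (cv dv : Fin (n - 1) → ℂ) :
    Matrix (Pn n ⊕ Pn n) (Pn n ⊕ Pn n) ℂ :=
  fromBlocks (Csp n c cv) (Dspm n d dv) (-(mconj (Dspm n d dv))) (mconj (Csp n c cv))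

/-- the bracket ad(e) X = [e, X] -/
def adE (n : ℕ) (X : Matrix (Pn n ⊕ Pn n) (Pn n ⊕ Pn n) ℂ) :
    Matrix (Pn n ⊕ Pn n) (Pn n ⊕ Pn n) ℂ :=
  esp n * X - X * esp n

set_option maxHeartbeats 4000000 in
lemma key (n : ℕ) (a b : ℂ) (av bv : Fin (n - 1) → ℂ) :
    (fromBlocks (E1sp n) 0 0 (E1sp n)) *
        ((fromBlocks (E1sp n) 0 0 (E1sp n)) * musp n a b av bv
          - musp n a b av bv * (fromBlocks (E1sp n) 0 0 (E1sp n)))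
      - ((fromBlocks (E1sp n) 0 0 (E1sp n)) * musp n a b av bv
          - musp n a b av bv * (fromBlocks (E1sp n) 0 0 (E1sp n))) *
          (fromBlocks (E1sp n) 0 0 (E1sp n))
      = musp n (-4 * a) (-4 * b) (fun j => -av j) (fun j => -bv j) := by
  ext i j
  obtain (i|(i|i)) | (i|(i|i)) := i <;> obtain (j|(j|j)) | (j|(j|j)) := j
  all_goals
    simp only [musp, Asp, Bsp, E1sp, mconj, Matrix.sub_apply, Matrix.mul_apply,
      fromBlocks_apply₁₁, fromBlocks_apply₁₂, fromBlocks_apply₂₁, fromBlocks_apply₂₂,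
      Fintype.sum_sum_type, Fin.sum_univ_one, of_apply, Sum.elim_inl, Sum.elim_inr,
      Matrix.zero_apply, Matrix.neg_apply, Matrix.map_apply, map_neg, map_zero,
      zero_mul, mul_zero, add_zero, zero_add, neg_zero, Finset.sum_const_zero,
      mul_one, one_mul, mul_neg, neg_mul, neg_neg, _root_.map_one, RingHom.map_mul]
  all_goals try simp only [star_neg, neg_neg, Complex.conj_ofNat, map_neg]
  all_goals try ring

lemma musp_four (n : ℕ) (a b : ℂ) :
    musp n (-4 * a) (-4 * b) (fun j => -(0 : Fin (n-1) → ℂ) j) (fun j => -(0 : Fin (n-1) → ℂ) j)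
      = (-4 : ℂ) • musp n a b 0 0 := by
  ext i j
  obtain (i|(i|i)) | (i|(i|i)) := i <;> obtain (j|(j|j)) | (j|(j|j)) := j <;>
    simp [musp, Asp, Bsp, mconj, fromBlocks, Complex.conj_ofNat] <;> ring

lemma musp_negv (n : ℕ) (av bv : Fin (n - 1) → ℂ) :
    musp n (-4 * 0) (-4 * 0) (fun j => -av j) (fun j => -bv j)
      = (-1 : ℂ) • musp n 0 0 av bv := by
  ext i j
  obtain (i|(i|i)) | (i|(i|i)) := i <;> obtain (j|(j|j)) | (j|(j|j)) := j <;>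
    simp [musp, Asp, Bsp, mconj, fromBlocks]

lemma adE_sq (n : ℕ) (X : Matrix (Pn n ⊕ Pn n) (Pn n ⊕ Pn n) ℂ) :
    adE n (adE n X)
      = ((8 * ((n : ℝ) + 2) : ℝ) : ℂ)⁻¹ •
          ((fromBlocks (E1sp n) 0 0 (E1sp n)) *
              ((fromBlocks (E1sp n) 0 0 (E1sp n)) * X - X * (fromBlocks (E1sp n) 0 0 (E1sp n)))
            - ((fromBlocks (E1sp n) 0 0 (E1sp n)) * X - X * (fromBlocks (E1sp n) 0 0 (E1sp n))) *
                (fromBlocks (E1sp n) 0 0 (E1sp n))) := by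
  set c : ℂ := ((Real.sqrt (8 * ((n : ℝ) + 2)) : ℂ))⁻¹ with hc
  set E := fromBlocks (E1sp n) 0 0 (E1sp n) with hE
  have hadE : ∀ Y, adE n Y = c • (E * Y - Y * E) := by
    intro Y
    simp [adE, esp, hc, hE, Matrix.smul_mul, Matrix.mul_smul, smul_sub]
  rw [hadE, hadE, Matrix.mul_smul, Matrix.smul_mul, ← smul_sub, smul_smul]
  congr 1
  have h0 : (0 : ℝ) ≤ 8 * ((n : ℝ) + 2) := by positivity
  rw [hc, ← mul_inv, ← Complex.ofReal_mul, Real.mul_self_sqrt h0]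

/-- [e,[e, μ((a,b),(𝐚,𝐛))]] = (1/χ) μ((−4a,−4b),(−𝐚,−𝐛)) with
χ = 8(n+2); in particular the subspaces {μ((a,b),(0,0))} and {μ((0,0),(𝐚,𝐛))}
are eigenspaces of ad(e)² with eigenvalues −4/χ and −1/χ respectively. -/
theorem stmt16 (n : ℕ) (hn : 1 ≤ n) (a b : ℂ) (av bv : Fin (n - 1) → ℂ)
    (ha : a.re = 0) :
    adE n (adE n (musp n a b av bv))
        = ((8 * ((n : ℝ) + 2) : ℝ) : ℂ)⁻¹ •
            musp n (-4 * a) (-4 * b) (fun j => -av j) (fun j => -bv j) ∧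
    adE n (adE n (musp n a b 0 0))
        = (-(4 * (((8 * ((n : ℝ) + 2) : ℝ) : ℂ))⁻¹)) • musp n a b 0 0 ∧
    adE n (adE n (musp n 0 0 av bv))
        = (-((((8 * ((n : ℝ) + 2) : ℝ) : ℂ))⁻¹)) • musp n 0 0 av bv := by
  have main : ∀ a b : ℂ, ∀ av bv : Fin (n - 1) → ℂ,
      adE n (adE n (musp n a b av bv))
        = ((8 * ((n : ℝ) + 2) : ℝ) : ℂ)⁻¹ •
            musp n (-4 * a) (-4 * b) (fun j => -av j) (fun j => -bv j) := by
    intro a b av bv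
    rw [adE_sq, key]
  refine ⟨main a b av bv, ?_, ?_⟩
  · rw [main a b 0 0, musp_four, smul_smul]
    congr 1
    ring
  · rw [main 0 0 av bv, musp_negv, smul_smul]
    congr 1
    ring
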